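/- Simulation of diamond in the simulation base: for every base B extending the simulation base N, ⊢_B ((◇φ)^x)♭ if and only if for all bases C ⊇ B and all atoms p^z, if (xRy)♭, (φ^y)♭ ⊢_C p^z for all labels y, then ⊢_C p^z. -/
import Mathlib


/-- Labels -/
abbrev Lbl := ℕ
/-- Propositional atoms -/
abbrev Atm := ℕ

/-- A basic sentence: a labelled atom `p^x` or a relational assumption `xRy`. -/
inductive BSent where
  | atom : Atm → Lbl → BSent
  | rel : Lbl → Lbl → BSent
deriving DecidableEq

/-- A basic sequent `(P ⇒ p)`. -/
abbrev BSeq := List BSent × BSent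

/-- A basic rule `((P₁ ⇒ p₁, …, Pₙ ⇒ pₙ) ⇒ r)`. -/
abbrev BRule := List BSeq × BSent

/-- A base is a set of basic rules. -/
abbrev Base := Set BRule

/-- Basic derivability `S ⊢_B p`, generated by (Ref) and (App). -/
inductive Der (B : Base) : Set BSent → BSent → Prop where
  | ref {S : Set BSent} {s : BSent} : s ∈ S → Der B S s
  | app {S : Set BSent} {r : BSent} {Ps : List BSeq} :
      (Ps, r) ∈ B →
      (∀ q ∈ Ps, Der B (S ∪ {a | a ∈ q.1}) q.2) →
      Der B S r
/-- Frame conditions. -/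
inductive FrameCond where
  | d | t | b | four | five | two
deriving DecidableEq

/-- Labels occurring in a basic sentence. -/
def BSent.labels : BSent → Set Lbl
  | .atom _ x => {x}
  | .rel x y => {x, y}

/-- Basic derivability `S ⊢_B^γ p` with the modal cases for the frame conditions γ. -/
inductive DerM (γ : Set FrameCond) (B : Base) : Set BSent → BSent → Prop where
  | ref {S : Set BSent} {s : BSent} : s ∈ S → DerM γ B S s
  | app {S : Set BSent} {r : BSent} {Ps : List BSeq} :
      (Ps, r) ∈ B →
      (∀ q ∈ Ps, DerM γ B (S ∪ {a | a ∈ q.1}) q.2) →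
      DerM γ B S r
  | dCase {S : Set BSent} {x y : Lbl} {p : Atm} {z : Lbl} : FrameCond.d ∈ γ →
      (∀ s ∈ S, y ∉ s.labels) → y ≠ x → y ≠ z →
      DerM γ B (insert (.rel x y) S) (.atom p z) → DerM γ B S (.atom p z)
  | tCase {S : Set BSent} {x : Lbl} {p : Atm} {y : Lbl} : FrameCond.t ∈ γ →
      DerM γ B (insert (.rel x x) S) (.atom p y) → DerM γ B S (.atom p y)
  | bCase {S : Set BSent} {x y : Lbl} {p : Atm} {z : Lbl} : FrameCond.b ∈ γ →
      DerM γ B S (.rel x y) →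
      DerM γ B (insert (.rel y x) S) (.atom p z) → DerM γ B S (.atom p z)
  | fourCase {S : Set BSent} {x y z : Lbl} {p : Atm} {w : Lbl} : FrameCond.four ∈ γ →
      DerM γ B S (.rel x y) → DerM γ B S (.rel y z) →
      DerM γ B (insert (.rel x z) S) (.atom p w) → DerM γ B S (.atom p w)
  | fiveCase {S : Set BSent} {x y z : Lbl} {p : Atm} {w : Lbl} : FrameCond.five ∈ γ →
      DerM γ B S (.rel x y) → DerM γ B S (.rel x z) →
      DerM γ B (insert (.rel y z) S) (.atom p w) → DerM γ B S (.atom p w)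
  | twoCase {S : Set BSent} {x y z w : Lbl} {p : Atm} {v : Lbl} : FrameCond.two ∈ γ →
      DerM γ B S (.rel x y) → DerM γ B S (.rel x z) →
      (∀ s ∈ S, w ∉ s.labels) → w ≠ x → w ≠ y → w ≠ z → w ≠ v →
      DerM γ B (insert (.rel y w) (insert (.rel z w) S)) (.atom p v) →
      DerM γ B S (.atom p v)

/-- Propositional modal formulae. -/
inductive Formula where
  | atom : Atm → Formula
  | top : Formula
  | bot : Formula
  | and : Formula → Formula → Formula
  | or : Formula → Formula → Formula
  | imp : Formula → Formula → Formula
  | box : Formula → Formula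
  | dia : Formula → Formula
deriving DecidableEq

/-- The support relation `⊩_B^γ φ^x` of the base-extension semantics. -/
def Spt (γ : Set FrameCond) : Formula → Base → Lbl → Prop
  | .atom p, B, x => DerM γ B ∅ (.atom p x)
  | .top, _, _ => True
  | .bot, B, _ => ∀ p z, DerM γ B ∅ (.atom p z)
  | .and φ ψ, B, x => Spt γ φ B x ∧ Spt γ ψ B x
  | .or φ ψ, B, x => ∀ C, B ⊆ C → ∀ (p : Atm) (z : Lbl),
      (∀ D, C ⊆ D → Spt γ φ D x → DerM γ D ∅ (.atom p z)) →
      (∀ D, C ⊆ D → Spt γ ψ D x → DerM γ D ∅ (.atom p z)) →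
      DerM γ C ∅ (.atom p z)
  | .imp φ ψ, B, x => ∀ C, B ⊆ C → Spt γ φ C x → Spt γ ψ C x
  | .box φ, B, x => ∀ (y : Lbl), ∀ C, B ⊆ C → DerM γ C ∅ (.rel x y) → Spt γ φ C y
  | .dia φ, B, x => ∀ C, B ⊆ C → ∀ (p : Atm) (z : Lbl),
      (∀ (y : Lbl), ∀ D, C ⊆ D → DerM γ D ∅ (.rel x y) → Spt γ φ D y →
        DerM γ D ∅ (.atom p z)) →
      DerM γ C ∅ (.atom p z)

/-- Extended formulae: labelled formulae or relational assumptions. -/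
inductive EForm where
  | f : Formula → Lbl → EForm
  | rel : Lbl → Lbl → EForm
deriving DecidableEq

/-- Support for extended formulae. -/
def SupE (γ : Set FrameCond) (B : Base) : EForm → Prop
  | .f φ x => Spt γ φ B x
  | .rel x y => DerM γ B ∅ (.rel x y)

/-- Support for extended sequents `Γ ⊩_B^γ e`: the (Inf) clause. -/
def SupSeq (γ : Set FrameCond) (B : Base) (Γ : Set EForm) (e : EForm) : Prop :=
  (Γ = ∅ → SupE γ B e) ∧
  (Γ ≠ ∅ → ∀ C, B ⊆ C → (∀ ψ ∈ Γ, SupE γ C ψ) → SupE γ C e)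

/-- Validity of a sequent: support in every base. -/
def Valid (γ : Set FrameCond) (Γ : Set EForm) (e : EForm) : Prop :=
  ∀ B : Base, SupSeq γ B Γ e

/-- Labels occurring in an extended formula. -/
def EForm.labels : EForm → Set Lbl
  | .f _ x => {x}
  | .rel x y => {x, y}

/-- Simpson's labelled natural deduction system N_□◇(γ). -/
inductive ND (γ : Set FrameCond) : Set EForm → Formula → Lbl → Prop where
  | hyp {Γ φ x} : EForm.f φ x ∈ Γ → ND γ Γ φ x
  | topI {Γ x} : ND γ Γ .top x
  | botE {Γ x φ y} : ND γ Γ .bot x → ND γ Γ φ y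
  | andI {Γ φ ψ x} : ND γ Γ φ x → ND γ Γ ψ x → ND γ Γ (Formula.and φ ψ) x
  | andE1 {Γ φ ψ x} : ND γ Γ (Formula.and φ ψ) x → ND γ Γ φ x
  | andE2 {Γ φ ψ x} : ND γ Γ (Formula.and φ ψ) x → ND γ Γ ψ x
  | orI1 {Γ φ ψ x} : ND γ Γ φ x → ND γ Γ (Formula.or φ ψ) x
  | orI2 {Γ φ ψ x} : ND γ Γ ψ x → ND γ Γ (Formula.or φ ψ) x
  | orE {Γ φ ψ χ x y} : ND γ Γ (Formula.or φ ψ) x → ND γ (insert (.f φ x) Γ) χ y →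
      ND γ (insert (.f ψ x) Γ) χ y → ND γ Γ χ y
  | impI {Γ φ ψ x} : ND γ (insert (.f φ x) Γ) ψ x → ND γ Γ (Formula.imp φ ψ) x
  | impE {Γ φ ψ x} : ND γ Γ (Formula.imp φ ψ) x → ND γ Γ φ x → ND γ Γ ψ x
  | boxI {Γ φ x y} : y ≠ x → (∀ e ∈ Γ, y ∉ e.labels) →
      ND γ (insert (.rel x y) Γ) φ y → ND γ Γ (Formula.box φ) x
  | boxE {Γ φ x y} : ND γ Γ (Formula.box φ) x → EForm.rel x y ∈ Γ → ND γ Γ φ y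
  | diaI {Γ φ x y} : ND γ Γ φ y → EForm.rel x y ∈ Γ → ND γ Γ (Formula.dia φ) x
  | diaE {Γ φ ψ x y z} : ND γ Γ (Formula.dia φ) x → y ≠ x → y ≠ z → (∀ e ∈ Γ, y ∉ e.labels) →
      ND γ (insert (.f φ y) (insert (.rel x y) Γ)) ψ z → ND γ Γ ψ z
  | rD {Γ φ x y z} : FrameCond.d ∈ γ → y ≠ x → y ≠ z → (∀ e ∈ Γ, y ∉ e.labels) →
      ND γ (insert (.rel x y) Γ) φ z → ND γ Γ φ z
  | rT {Γ φ x y} : FrameCond.t ∈ γ → ND γ (insert (.rel x x) Γ) φ y → ND γ Γ φ y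
  | rB {Γ φ x y z} : FrameCond.b ∈ γ → EForm.rel x y ∈ Γ →
      ND γ (insert (.rel y x) Γ) φ z → ND γ Γ φ z
  | r4 {Γ φ x y z w} : FrameCond.four ∈ γ → EForm.rel x y ∈ Γ → EForm.rel y z ∈ Γ →
      ND γ (insert (.rel x z) Γ) φ w → ND γ Γ φ w
  | r5 {Γ φ x y z w} : FrameCond.five ∈ γ → EForm.rel x y ∈ Γ → EForm.rel x z ∈ Γ →
      ND γ (insert (.rel y z) Γ) φ w → ND γ Γ φ w
  | r2 {Γ φ x y z w v} : FrameCond.two ∈ γ → EForm.rel x y ∈ Γ → EForm.rel x z ∈ Γ →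
      w ≠ x → w ≠ y → w ≠ z → w ≠ v → (∀ e ∈ Γ, w ∉ e.labels) →
      ND γ (insert (.rel y w) (insert (.rel z w) Γ)) φ v → ND γ Γ φ v
/-- Generalized subformulae of a labelled formula. -/
def gsubs : Formula → Lbl → Set EForm
  | .atom p, x => {.f (.atom p) x}
  | .top, x => {.f .top x}
  | .bot, x => {.f .bot x}
  | .and φ ψ, x => insert (.f (Formula.and φ ψ) x) (gsubs φ x ∪ gsubs ψ x)
  | .or φ ψ, x => insert (.f (Formula.or φ ψ) x) (gsubs φ x ∪ gsubs ψ x)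
  | .imp φ ψ, x => insert (.f (Formula.imp φ ψ) x) (gsubs φ x ∪ gsubs ψ x)
  | .box φ, x => insert (.f (Formula.box φ) x) ((⋃ z, gsubs φ z) ∪ ⋃ z, {EForm.rel x z})
  | .dia φ, x => insert (.f (Formula.dia φ) x) ((⋃ z, gsubs φ z) ∪ ⋃ z, {EForm.rel x z})

/-- Generalized subformulae of an extended formula. -/
def gsubsE : EForm → Set EForm
  | .f φ x => gsubs φ x
  | .rel x y => {.rel x y}

/-- The set Ξ of generalized subformulae of the sequent (Γ : φ^x). -/
def XiOf (Γ : Set EForm) (φ : Formula) (x : Lbl) : Set EForm :=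
  (⋃ e ∈ Γ, gsubsE e) ∪ gsubs φ x

/-- Labels occurring in elements of Ξ. -/
def labOf (Ξ : Set EForm) : Set Lbl := ⋃ e ∈ Ξ, e.labels

/-- A flattening map on Ξ: identity on atoms, injective on Ξ, producing
    fresh atoms for non-atomic generalized subformulae. -/
structure Flattening (Ξ : Set EForm) (fl : EForm → BSent) : Prop where
  atom_id : ∀ (p : Atm) (x : Lbl), fl (.f (.atom p) x) = .atom p x
  inj : ∀ e ∈ Ξ, ∀ e' ∈ Ξ, fl e = fl e' → e = e'
  isAtom : ∀ e ∈ Ξ, ∃ (p : Atm) (x : Lbl), fl e = .atom p x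
  fresh : ∀ e ∈ Ξ, (∀ (p : Atm) (x : Lbl), e ≠ .f (.atom p) x) →
    ∀ (p : Atm) (x : Lbl), fl e = .atom p x → EForm.f (.atom p) x ∉ Ξ

/-- The rules of the simulation base N relative to Ξ, fl, and γ. -/
inductive SimRule (Ξ : Set EForm) (fl : EForm → BSent) (γ : Set FrameCond) : BRule → Prop where
  | topI {x} : EForm.f .top x ∈ Ξ →
      SimRule Ξ fl γ ([], fl (.f .top x))
  | botE {x p z} : EForm.f .bot x ∈ Ξ →
      SimRule Ξ fl γ ([([], fl (.f .bot x))], .atom p z)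
  | andI {φ ψ x} : EForm.f (Formula.and φ ψ) x ∈ Ξ →
      SimRule Ξ fl γ ([([], fl (.f φ x)), ([], fl (.f ψ x))], fl (.f (Formula.and φ ψ) x))
  | andE1 {φ ψ x} : EForm.f (Formula.and φ ψ) x ∈ Ξ →
      SimRule Ξ fl γ ([([], fl (.f (Formula.and φ ψ) x))], fl (.f φ x))
  | andE2 {φ ψ x} : EForm.f (Formula.and φ ψ) x ∈ Ξ →
      SimRule Ξ fl γ ([([], fl (.f (Formula.and φ ψ) x))], fl (.f ψ x))
  | orI1 {φ ψ x} : EForm.f (Formula.or φ ψ) x ∈ Ξ →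
      SimRule Ξ fl γ ([([], fl (.f φ x))], fl (.f (Formula.or φ ψ) x))
  | orI2 {φ ψ x} : EForm.f (Formula.or φ ψ) x ∈ Ξ →
      SimRule Ξ fl γ ([([], fl (.f ψ x))], fl (.f (Formula.or φ ψ) x))
  | orE {φ ψ x p z} : EForm.f (Formula.or φ ψ) x ∈ Ξ →
      SimRule Ξ fl γ ([([], fl (.f (Formula.or φ ψ) x)),
        ([fl (.f φ x)], .atom p z), ([fl (.f ψ x)], .atom p z)], .atom p z)
  | impI {φ ψ x} : EForm.f (Formula.imp φ ψ) x ∈ Ξ →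
      SimRule Ξ fl γ ([([fl (.f φ x)], fl (.f ψ x))], fl (.f (Formula.imp φ ψ) x))
  | impE {φ ψ x} : EForm.f (Formula.imp φ ψ) x ∈ Ξ →
      SimRule Ξ fl γ ([([], fl (.f (Formula.imp φ ψ) x)), ([], fl (.f φ x))], fl (.f ψ x))
  | boxI {φ x y} : EForm.f (Formula.box φ) x ∈ Ξ → y ≠ x →
      SimRule Ξ fl γ ([([fl (.rel x y)], fl (.f φ y))], fl (.f (Formula.box φ) x))
  | boxE {φ x z} : EForm.f (Formula.box φ) x ∈ Ξ →
      SimRule Ξ fl γ ([([], fl (.f (Formula.box φ) x)), ([], fl (.rel x z))], fl (.f φ z))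
  | diaI {φ x z} : EForm.f (Formula.dia φ) x ∈ Ξ →
      SimRule Ξ fl γ ([([], fl (.f φ z)), ([], fl (.rel x z))], fl (.f (Formula.dia φ) x))
  | diaE {φ x y p z} : EForm.f (Formula.dia φ) x ∈ Ξ → y ≠ x → y ≠ z →
      SimRule Ξ fl γ ([([], fl (.f (Formula.dia φ) x)),
        ([fl (.rel x y), fl (.f φ y)], .atom p z)], .atom p z)
  | rD {x y p a} : FrameCond.d ∈ γ → x ∈ labOf Ξ → a ∈ labOf Ξ → y ≠ x → y ≠ a →
      SimRule Ξ fl γ ([([fl (.rel x y)], .atom p a)], .atom p a)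
  | rT {x p a} : FrameCond.t ∈ γ → x ∈ labOf Ξ → a ∈ labOf Ξ →
      SimRule Ξ fl γ ([([fl (.rel x x)], .atom p a)], .atom p a)
  | rB {x z p a} : FrameCond.b ∈ γ → x ∈ labOf Ξ → z ∈ labOf Ξ → a ∈ labOf Ξ →
      SimRule Ξ fl γ ([([], fl (.rel x z)), ([fl (.rel z x)], .atom p a)], .atom p a)
  | r4 {x w z p a} : FrameCond.four ∈ γ → x ∈ labOf Ξ → w ∈ labOf Ξ → z ∈ labOf Ξ →
      a ∈ labOf Ξ →
      SimRule Ξ fl γ ([([], fl (.rel x w)), ([], fl (.rel w z)),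
        ([fl (.rel x z)], .atom p a)], .atom p a)
  | r5 {x w z p a} : FrameCond.five ∈ γ → x ∈ labOf Ξ → w ∈ labOf Ξ → z ∈ labOf Ξ →
      a ∈ labOf Ξ →
      SimRule Ξ fl γ ([([], fl (.rel x w)), ([], fl (.rel x z)),
        ([fl (.rel w z)], .atom p a)], .atom p a)
  | r2 {x w z y p a} : FrameCond.two ∈ γ → x ∈ labOf Ξ → w ∈ labOf Ξ → z ∈ labOf Ξ →
      a ∈ labOf Ξ → y ≠ x → y ≠ w → y ≠ z → y ≠ a →
      SimRule Ξ fl γ ([([], fl (.rel x w)), ([], fl (.rel x z)),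
        ([fl (.rel w y), fl (.rel z y)], .atom p a)], .atom p a)

/-- The simulation base N. -/
def SimBase (Ξ : Set EForm) (fl : EForm → BSent) (γ : Set FrameCond) : Base :=
  { r | SimRule Ξ fl γ r }

lemma fresh_ne1 (x z : ℕ) : x + z + 1 ≠ x := by omega
lemma fresh_ne2 (x z : ℕ) : x + z + 1 ≠ z := by omega

/-- Monotonicity of derivability in the base. -/
lemma derM_mono {γ : Set FrameCond} {B C : Base} {S : Set BSent} {r : BSent}
    (h : DerM γ B S r) (hBC : B ⊆ C) : DerM γ C S r := by
  induction h with
  | ref h => exact .ref h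
  | app hr _ ih => exact .app (hBC hr) ih
  | dCase h1 h2 h3 h4 _ ih => exact .dCase h1 h2 h3 h4 ih
  | tCase h1 _ ih => exact .tCase h1 ih
  | bCase h1 _ _ ih1 ih2 => exact .bCase h1 ih1 ih2
  | fourCase h1 _ _ _ ih1 ih2 ih3 => exact .fourCase h1 ih1 ih2 ih3
  | fiveCase h1 _ _ _ ih1 ih2 ih3 => exact .fiveCase h1 ih1 ih2 ih3
  | twoCase h1 _ _ h2 h3 h4 h5 h6 _ ih1 ih2 ih3 =>
      exact .twoCase h1 ih1 ih2 h2 h3 h4 h5 h6 ih3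

/-- Simulation of diamond in the simulation base. -/
theorem sim_dia (γ : Set FrameCond) (Γ₀ : Set EForm) (φ₀ : Formula) (x₀ : Lbl)
    (fl : EForm → BSent) (hfl : Flattening (XiOf Γ₀ φ₀ x₀) fl)
    (B : Base) (hB : SimBase (XiOf Γ₀ φ₀ x₀) fl γ ⊆ B)
    (φ : Formula) (x : Lbl) (hmem : EForm.f (Formula.dia φ) x ∈ XiOf Γ₀ φ₀ x₀) :
    DerM γ B ∅ (fl (.f (Formula.dia φ) x)) ↔
      ∀ C : Base, B ⊆ C → ∀ (p : Atm) (z : Lbl),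
        (∀ y : Lbl, DerM γ C {fl (.rel x y), fl (.f φ y)} (.atom p z)) →
        DerM γ C ∅ (.atom p z) := by
  constructor
  · intro hder C hBC p z h
    have hyx : x + z + 1 ≠ x := fresh_ne1 x z
    have hyz : x + z + 1 ≠ z := fresh_ne2 x z
    set y : Lbl := x + z + 1 with hy
    have hrule : ([([], fl (.f (Formula.dia φ) x)),
        ([fl (.rel x y), fl (.f φ y)], BSent.atom p z)], BSent.atom p z) ∈ C :=
      hBC (hB (SimRule.diaE hmem hyx hyz))
    refine DerM.app hrule ?_
    intro q hq
    simp only [List.mem_cons, List.mem_singleton] at hq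
    rcases hq with rfl | rfl | h'
    · have : (∅ ∪ {a | a ∈ ([] : List BSent)}) = (∅ : Set BSent) := by
        ext a; simp
      rw [this]
      exact derM_mono hder hBC
    · have : (∅ ∪ {a | a ∈ [fl (.rel x y), fl (.f φ y)]}) =
          ({fl (.rel x y), fl (.f φ y)} : Set BSent) := by
        ext a; simp
      rw [this]
      exact h y
    · exact absurd h' (by simp)
  · intro h
    obtain ⟨q, w, hqw⟩ := hfl.isAtom _ hmem
    rw [hqw]
    refine h B (Set.Subset.refl _) q w ?_
    intro y
    have hrule : ([([], fl (.f φ y)), ([], fl (.rel x y))],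
        fl (.f (Formula.dia φ) x)) ∈ B := hB (SimRule.diaI hmem)
    have : DerM γ B {fl (.rel x y), fl (.f φ y)} (fl (.f (Formula.dia φ) x)) := by
      refine DerM.app hrule ?_
      intro q' hq'
      simp only [List.mem_cons, List.mem_singleton] at hq'
      rcases hq' with rfl | rfl | h'
      · exact DerM.ref (Or.inl (by simp))
      · exact DerM.ref (Or.inl (by simp))
      · exact absurd h' (by simp)
    rwa [hqw] at this
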